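/- arXiv:2602.13247 — 6 statements merged into one kernel-verified Lean document; each statement's English description precedes it below -/
import Mathlib

section
/- Let E be a real Banach space and v : E → E a vector field that is C¹ at a point x₀. If α, β : ℝ → E are two integral curves of v on an open interval I containing t₀, with α(t₀) = β(t₀) = x₀, then α and β agree on a neighbourhood of t₀ within I. -/
open Set Metric Filter Topology

theorem Filter.Eventually.hasDerivAt_of_hasDerivWithinAt {F : Type*} [NormedAddCommGroup F]
    [NormedSpace ℝ F] {f f' : ℝ → F} {s : Set ℝ} {t₀ : ℝ} (hs : s ∈ 𝓝 t₀)
    (hf : ∀ t ∈ s, HasDerivWithinAt f (f' t) s t) : ∀ᶠ t in 𝓝 t₀, HasDerivAt f (f' t) t :=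
  (eventually_mem_nhds_iff.mpr hs).mono fun t ht ↦ (hf t (mem_of_mem_nhds ht)).hasDerivAt ht

theorem eventuallyEq_of_hasDerivAt_of_lipschitzOnWith {E : Type*} [NormedAddCommGroup E]
    [NormedSpace ℝ E] {v : E → E} {s : Set E} {K : NNReal} {x₀ : E}
    (hlip : LipschitzOnWith K v s) (hs : s ∈ 𝓝 x₀) {f g : ℝ → E} {t₀ : ℝ}
    (hf : ∀ᶠ t in 𝓝 t₀, HasDerivAt f (v (f t)) t) (hf₀ : f t₀ = x₀)
    (hg : ∀ᶠ t in 𝓝 t₀, HasDerivAt g (v (g t)) t) (hg₀ : g t₀ = x₀) :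
    f =ᶠ[𝓝 t₀] g := by
  have hfs : ∀ᶠ t in 𝓝 t₀, f t ∈ s := hf.self_of_nhds.continuousAt (hf₀ ▸ hs)
  have hgs : ∀ᶠ t in 𝓝 t₀, g t ∈ s := hg.self_of_nhds.continuousAt (hg₀ ▸ hs)
  exact ODE_solution_unique_of_eventually (v := fun _ ↦ v) (s := fun _ ↦ s)
    (.of_forall fun _ ↦ hlip) (hf.and hfs) (hg.and hgs) (hf₀.trans hg₀.symm)

theorem isIntegralCurveOn_Ioo_eventuallyEq_of_contDiffAt_general
    {E : Type*} [NormedAddCommGroup E] [NormedSpace ℝ E]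
    {v : E → E} {x₀ : E} (hv : ContDiffAt ℝ 1 v x₀)
    {α β : ℝ → E} {a b t₀ : ℝ} (ht₀ : t₀ ∈ Ioo a b)
    (hα : ∀ t ∈ Ioo a b, HasDerivWithinAt α (v (α t)) (Ioo a b) t) (hα₀ : α t₀ = x₀)
    (hβ : ∀ t ∈ Ioo a b, HasDerivWithinAt β (v (β t)) (Ioo a b) t) (hβ₀ : β t₀ = x₀) :
    ∀ᶠ t in 𝓝[Ioo a b] t₀, α t = β t := by
  obtain ⟨K, s, hs, hlip⟩ := hv.exists_lipschitzOnWith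
  have hIoo : Ioo a b ∈ 𝓝 t₀ := Ioo_mem_nhds ht₀.1 ht₀.2
  have hαβ : α =ᶠ[𝓝 t₀] β := eventuallyEq_of_hasDerivAt_of_lipschitzOnWith hlip hs
    (.hasDerivAt_of_hasDerivWithinAt hIoo hα) hα₀ (.hasDerivAt_of_hasDerivWithinAt hIoo hβ) hβ₀
  exact hαβ.filter_mono nhdsWithin_le_nhds

/-- **Local uniqueness of integral curves** in a Banach space: if `v : E → E` is `C¹` at `x₀`
and `α`, `β` are integral curves of `v` on an open interval `(a, b)` containing `t₀` with
`α t₀ = β t₀ = x₀`, then `α` and `β` agree on a neighbourhood of `t₀` within `(a, b)`. -/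
theorem isIntegralCurveOn_Ioo_eventuallyEq_of_contDiffAt
    {E : Type*} [NormedAddCommGroup E] [NormedSpace ℝ E] [CompleteSpace E]
    {v : E → E} {x₀ : E} (hv : ContDiffAt ℝ 1 v x₀)
    {α β : ℝ → E} {a b t₀ : ℝ} (ht₀ : t₀ ∈ Ioo a b)
    (hα : ∀ t ∈ Ioo a b, HasDerivWithinAt α (v (α t)) (Ioo a b) t) (hα₀ : α t₀ = x₀)
    (hβ : ∀ t ∈ Ioo a b, HasDerivWithinAt β (v (β t)) (Ioo a b) t) (hβ₀ : β t₀ = x₀) :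
    ∀ᶠ t in 𝓝[Ioo a b] t₀, α t = β t :=
  isIntegralCurveOn_Ioo_eventuallyEq_of_contDiffAt_general hv ht₀ hα hα₀ hβ hβ₀
end

section
/- Let E be a real Banach space, v : ℝ → E → E a vector field satisfying the Picard–Lindelöf conditions at (t₀, x₀) with constants a, r, L, K on [tmin, tmax], and let α : E → ℝ → E be the corresponding local flow (so that for each x in the closed ball of radius r around x₀, α(x)(t₀) = x and α(x) is an integral curve of v on [tmin, tmax], each α(x) being L-Lipschitz in time). Then the map (t, x) ↦ α(x)(t) is continuous on [tmin, tmax] × closedBall(x₀, r). -/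
/-!
Two integral curves of a field that is `K`-Lipschitz in space drift apart at most by the factor
`exp (K * |t - t₀|)`: this is Grönwall's inequality forward in time, and backward in time after
reversing it. The curves `α x` stay in the ball of radius `a` where the Lipschitz bound holds,
since they move at speed at most `L` and start within `r` of `x₀`. Hence `α` is Lipschitz in `x`
uniformly in `t`, and continuous in `t` for each `x`, which together give joint continuity.
-/

open Set Metric NNReal

theorem LipschitzOnWith.mapsTo_closedBall_of_mul_max_le {X : Type*} [PseudoMetricSpace X]
    {γ : ℝ → X} {L : ℝ≥0} {tmin tmax t₀ a r : ℝ} {x₀ : X}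
    (hγ : LipschitzOnWith L γ (Icc tmin tmax)) (ht₀ : t₀ ∈ Icc tmin tmax)
    (hγ₀ : γ t₀ ∈ closedBall x₀ r) (hmul : L * max (tmax - t₀) (t₀ - tmin) ≤ a - r) :
    MapsTo γ (Icc tmin tmax) (closedBall x₀ a) := fun t ht ↦ by
  rw [mem_closedBall] at hγ₀ ⊢
  calc dist (γ t) x₀ ≤ dist (γ t) (γ t₀) + dist (γ t₀) x₀ := dist_triangle _ _ _
    _ ≤ L * |t - t₀| + r := add_le_add (hγ.dist_le_mul t ht t₀ ht₀) hγ₀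
    _ ≤ L * max (tmax - t₀) (t₀ - tmin) + r := by
      gcongr
      exact abs_sub_le_max_sub ht.1 ht.2 t₀
    _ ≤ a := by linarith

section Gronwall

open Real

variable {E : Type*} [NormedAddCommGroup E] [NormedSpace ℝ E] {v : ℝ → E → E} {s : ℝ → Set E}
  {K : ℝ≥0} {f g : ℝ → E}

theorem IsIntegralCurveOn.comp_neg {I : Set ℝ} (hf : IsIntegralCurveOn f v I) :
    IsIntegralCurveOn (fun t ↦ f (-t)) (fun t x ↦ -v (-t) x) (-I) := fun t ht ↦ by
  simpa [Function.comp_def] using (hf (-t) ht).scomp t (hasDerivWithinAt_neg t (-I)) fun _ hu ↦ hu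

theorem dist_le_of_isIntegralCurveOn_Icc_right {a b t : ℝ}
    (hv : ∀ t ∈ Icc a b, LipschitzOnWith K (v t) (s t))
    (hf : IsIntegralCurveOn f v (Icc a b)) (hfs : ∀ t ∈ Icc a b, f t ∈ s t)
    (hg : IsIntegralCurveOn g v (Icc a b)) (hgs : ∀ t ∈ Icc a b, g t ∈ s t)
    (ht : t ∈ Icc a b) :
    dist (f t) (g t) ≤ dist (f a) (g a) * exp (K * (t - a)) :=
  have right_deriv {γ : ℝ → E} (hγ : IsIntegralCurveOn γ v (Icc a b)) (u : ℝ) (hu : u ∈ Ico a b) :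
      HasDerivWithinAt γ (v u (γ u)) (Ici u) u :=
    (hγ u (Ico_subset_Icc_self hu)).mono_of_mem_nhdsWithin (Icc_mem_nhdsGE_of_mem hu)
  dist_le_of_trajectories_ODE_of_mem (fun u hu ↦ hv u (Ico_subset_Icc_self hu))
    hf.continuousOn (right_deriv hf) (fun u hu ↦ hfs u (Ico_subset_Icc_self hu))
    hg.continuousOn (right_deriv hg) (fun u hu ↦ hgs u (Ico_subset_Icc_self hu)) le_rfl t ht

theorem dist_le_of_isIntegralCurveOn_Icc {tmin tmax t₀ t : ℝ}
    (hv : ∀ t ∈ Icc tmin tmax, LipschitzOnWith K (v t) (s t))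
    (hf : IsIntegralCurveOn f v (Icc tmin tmax)) (hfs : ∀ t ∈ Icc tmin tmax, f t ∈ s t)
    (hg : IsIntegralCurveOn g v (Icc tmin tmax)) (hgs : ∀ t ∈ Icc tmin tmax, g t ∈ s t)
    (ht₀ : t₀ ∈ Icc tmin tmax) (ht : t ∈ Icc tmin tmax) :
    dist (f t) (g t) ≤ dist (f t₀) (g t₀) * exp (K * |t - t₀|) := by
  rcases le_total t₀ t with h | h
  · have hsub : Icc t₀ tmax ⊆ Icc tmin tmax := Icc_subset_Icc_left ht₀.1
    rw [abs_of_nonneg (sub_nonneg.2 h)]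
    exact dist_le_of_isIntegralCurveOn_Icc_right (fun u hu ↦ hv u (hsub hu)) (hf.mono hsub)
      (fun u hu ↦ hfs u (hsub hu)) (hg.mono hsub) (fun u hu ↦ hgs u (hsub hu)) ⟨h, ht.2⟩
  · have hsub : Icc tmin t₀ ⊆ Icc tmin tmax := Icc_subset_Icc_right ht₀.2
    have hneg : ∀ u ∈ Icc (-t₀) (-tmin), -u ∈ Icc tmin t₀ := fun u hu ↦ by
      rwa [← mem_neg, neg_Icc]
    have hrev {γ : ℝ → E} (hγ : IsIntegralCurveOn γ v (Icc tmin tmax)) :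
        IsIntegralCurveOn (fun u ↦ γ (-u)) (fun u x ↦ -v (-u) x) (Icc (-t₀) (-tmin)) := by
      simpa only [neg_Icc] using (hγ.mono hsub).comp_neg
    have hv' : ∀ u ∈ Icc (-t₀) (-tmin), LipschitzOnWith K (fun x ↦ -v (-u) x) (s (-u)) :=
      fun u hu ↦ LipschitzOnWith.of_dist_le_mul fun x hx y hy ↦ by
        rw [dist_neg_neg]
        exact (hv (-u) (hsub (hneg u hu))).dist_le_mul x hx y hy
    have := dist_le_of_isIntegralCurveOn_Icc_right hv' (hrev hf)
      (fun u hu ↦ hfs _ (hsub (hneg u hu))) (hrev hg) (fun u hu ↦ hgs _ (hsub (hneg u hu)))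
      (t := -t) ⟨neg_le_neg h, neg_le_neg ht.1⟩
    rw [abs_of_nonpos (sub_nonpos.2 h), neg_sub]
    simpa only [neg_neg, neg_sub_neg] using this

theorem lipschitzOnWith_flow_of_isIntegralCurveOn {α : E → ℝ → E} {X u : Set E}
    {tmin tmax t₀ t : ℝ} (hv : ∀ t ∈ Icc tmin tmax, LipschitzOnWith K (v t) u)
    (hα₀ : ∀ x ∈ X, α x t₀ = x) (hα : ∀ x ∈ X, IsIntegralCurveOn (α x) v (Icc tmin tmax))
    (hαu : ∀ x ∈ X, MapsTo (α x) (Icc tmin tmax) u)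
    (ht₀ : t₀ ∈ Icc tmin tmax) (ht : t ∈ Icc tmin tmax) :
    LipschitzOnWith (exp (K * max (tmax - t₀) (t₀ - tmin))).toNNReal (α · t) X :=
  LipschitzOnWith.of_dist_le_mul fun x hx y hy ↦ by
    rw [Real.coe_toNNReal _ (exp_nonneg _), mul_comm]
    calc dist (α x t) (α y t) ≤ dist (α x t₀) (α y t₀) * exp (K * |t - t₀|) :=
          dist_le_of_isIntegralCurveOn_Icc (s := fun _ ↦ u) hv (hα x hx) (hαu x hx)
            (hα y hy) (hαu y hy) ht₀ ht
      _ ≤ dist x y * exp (K * max (tmax - t₀) (t₀ - tmin)) := by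
          rw [hα₀ x hx, hα₀ y hy]
          gcongr
          exact abs_sub_le_max_sub ht.1 ht.2 t₀

end Gronwall

theorem continuousOn_flow_of_isPicardLindelof_general
    {E : Type*} [NormedAddCommGroup E] [NormedSpace ℝ E]
    (v : ℝ → E → E) {tmin tmax t₀ : ℝ} (ht₀ : t₀ ∈ Icc tmin tmax) (x₀ : E)
    (a r L K : ℝ≥0)
    (hlip : ∀ t ∈ Icc tmin tmax, LipschitzOnWith K (v t) (closedBall x₀ a))
    (hmul : (L : ℝ) * max (tmax - t₀) (t₀ - tmin) ≤ (a : ℝ) - r)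
    (α : E → ℝ → E)
    (hα : ∀ x ∈ closedBall x₀ r, α x t₀ = x ∧
      (∀ t ∈ Icc tmin tmax, HasDerivWithinAt (α x) (v t (α x t)) (Icc tmin tmax) t) ∧
      LipschitzOnWith L (α x) (Icc tmin tmax)) :
    ContinuousOn (fun p : ℝ × E => α p.2 p.1) (Icc tmin tmax ×ˢ closedBall x₀ r) := by
  have hα₀ x hx : α x t₀ = x := (hα x hx).1
  have hcurve x hx : IsIntegralCurveOn (α x) v (Icc tmin tmax) := (hα x hx).2.1
  have hmaps x hx : MapsTo (α x) (Icc tmin tmax) (closedBall x₀ a) :=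
    (hα x hx).2.2.mapsTo_closedBall_of_mul_max_le ht₀ (by rwa [hα₀ x hx]) hmul
  exact continuousOn_prod_of_continuousOn_lipschitzOnWith' _ _
    (fun t ht ↦ lipschitzOnWith_flow_of_isIntegralCurveOn hlip hα₀ hcurve hmaps ht₀ ht)
    (fun x hx ↦ (hcurve x hx).continuousOn)

/-- **Continuity of the local flow**: under the Picard–Lindelöf conditions for `v` at `(t₀, x₀)`
with constants `a`, `r`, `L`, `K` on `[tmin, tmax]`, if `α : E → ℝ → E` is a local flow of `v`
(each `α x`, for `x` in the closed ball of radius `r` around `x₀`, starts at `x` at time `t₀`,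
is an integral curve of `v` on `[tmin, tmax]`, and is `L`-Lipschitz in time), then
`(t, x) ↦ α x t` is continuous on `[tmin, tmax] × closedBall x₀ r`. -/
theorem continuousOn_flow_of_isPicardLindelof
    {E : Type*} [NormedAddCommGroup E] [NormedSpace ℝ E] [CompleteSpace E]
    (v : ℝ → E → E) {tmin tmax t₀ : ℝ} (ht₀ : t₀ ∈ Icc tmin tmax) (x₀ : E)
    (a r L K : ℝ≥0)
    (hlip : ∀ t ∈ Icc tmin tmax, LipschitzOnWith K (v t) (closedBall x₀ a))
    (hcont : ∀ x ∈ closedBall x₀ a, ContinuousOn (fun t => v t x) (Icc tmin tmax))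
    (hnorm : ∀ t ∈ Icc tmin tmax, ∀ x ∈ closedBall x₀ a, ‖v t x‖ ≤ L)
    (hmul : (L : ℝ) * max (tmax - t₀) (t₀ - tmin) ≤ (a : ℝ) - r)
    (α : E → ℝ → E)
    (hα : ∀ x ∈ closedBall x₀ r, α x t₀ = x ∧
      (∀ t ∈ Icc tmin tmax, HasDerivWithinAt (α x) (v t (α x t)) (Icc tmin tmax) t) ∧
      LipschitzOnWith L (α x) (Icc tmin tmax)) :
    ContinuousOn (fun p : ℝ × E => α p.2 p.1) (Icc tmin tmax ×ˢ closedBall x₀ r) :=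
  continuousOn_flow_of_isPicardLindelof_general v ht₀ x₀ a r L K hlip hmul α hα
end

section
/- Let M be a smooth manifold without boundary modelled on a real Banach space E via a model with corners I, and let v be a vector field on M (a section of the tangent bundle, assigning to each x ∈ M an element of the tangent space at x) that is C¹ at a point x₀ ∈ M, in the sense that the map x ↦ (x, v(x)) into the tangent bundle is C¹ at x₀. Then for any t₀ ∈ ℝ there exist ε > 0 and a curve α : ℝ → M such that α(t₀) = x₀ and α is an integral curve of v on the open interval (t₀ − ε, t₀ + ε). -/
open Set Metric
open scoped Manifold Topology

/-- **Local existence of integral curves on manifolds**: if `v` is a vector field on a manifold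
`M` without boundary, modelled on a Banach space `E`, and `v` is `C¹` at `x₀`, then for any
`t₀ : ℝ` there exist `ε > 0` and a curve `α : ℝ → M` with `α t₀ = x₀` that is an integral curve
of `v` on the open interval `(t₀ - ε, t₀ + ε)`. -/
theorem exists_isIntegralCurveOn_Ioo_of_contMDiffAt
    {E : Type*} [NormedAddCommGroup E] [NormedSpace ℝ E] [CompleteSpace E]
    {H : Type*} [TopologicalSpace H] {I : ModelWithCorners ℝ E H} [I.Boundaryless]
    {M : Type*} [TopologicalSpace M] [ChartedSpace H M] [IsManifold I ((⊤ : ℕ∞) : WithTop ℕ∞) M]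
    {v : (x : M) → TangentSpace I x} {x₀ : M}
    (hv : ContMDiffAt I I.tangent 1 (fun x => (⟨x, v x⟩ : TangentBundle I M)) x₀)
    (t₀ : ℝ) :
    ∃ ε > (0 : ℝ), ∃ α : ℝ → M, α t₀ = x₀ ∧
      ∀ t ∈ Ioo (t₀ - ε) (t₀ + ε),
        HasMFDerivAt 𝓘(ℝ, ℝ) I α t ((1 : ℝ →L[ℝ] ℝ).smulRight (v (α t))) := by
  obtain ⟨α, hα, h⟩ := exists_isMIntegralCurveAt_of_contMDiffAt_boundaryless t₀ hv
  obtain ⟨ε, hε, hball⟩ := eventually_nhds_iff_ball.mp h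
  exact ⟨ε, hε, α, hα, fun t ht => hball t (by rwa [Real.ball_eq_Ioo])⟩
end

section
/- Let M be a smooth manifold without boundary modelled on a real Banach space E, and let v be a vector field on M. Let α, β : ℝ → M be integral curves of v on an open interval J containing t₀, with α(t₀) = β(t₀), and suppose v is C¹ at α(t) for every t ∈ J. Then the set {t ∈ J : α(t) = β(t)} is both open and closed in J; consequently α and β agree on all of J. -/
open Set
open scoped Manifold Topology

/-! The equalizer of the two curves is closed because `M` is Hausdorff, and open by local
uniqueness of integral curves of a `C¹` vector field (Grönwall's inequality in a chart,
where `v` is locally Lipschitz); an interval is connected, so the equalizer is everything once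
it is nonempty. -/

theorem IsPreconnected.eqOn_of_isClopen_setOf_eq {X Y : Type*} [TopologicalSpace X] {s : Set X}
    {f g : X → Y} {t₀ : X} (hs : IsPreconnected s) (ht₀ : t₀ ∈ s) (heq : f t₀ = g t₀)
    (hclopen : IsClopen {t : s | f t = g t}) : EqOn f g s := by
  have : PreconnectedSpace s := Subtype.preconnectedSpace hs
  intro t ht
  exact eq_univ_iff_forall.mp (hclopen.eq_univ ⟨⟨t₀, ht₀⟩, heq⟩) ⟨t, ht⟩

section IntegralCurve

variable {E : Type*} [NormedAddCommGroup E] [NormedSpace ℝ E]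
  {H : Type*} [TopologicalSpace H] {I : ModelWithCorners ℝ E H}
  {M : Type*} [TopologicalSpace M] [ChartedSpace H M]
  {v : (x : M) → TangentSpace I x} {α β : ℝ → M} {s : Set ℝ}

theorem isClosed_setOf_eq_of_isMIntegralCurveOn [T2Space M]
    (hα : IsMIntegralCurveOn α v s) (hβ : IsMIntegralCurveOn β v s) :
    IsClosed {t : s | α t = β t} :=
  isClosed_eq hα.continuousOn.domRestrict hβ.continuousOn.domRestrict

theorem isOpen_setOf_eq_of_isMIntegralCurveOn [IsManifold I 1 M] [BoundarylessManifold I M]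
    (hs : IsOpen s) (hα : IsMIntegralCurveOn α v s) (hβ : IsMIntegralCurveOn β v s)
    (hv : ∀ t ∈ s, ContMDiffAt I I.tangent 1 (fun x => (⟨x, v x⟩ : TangentBundle I M)) (α t)) :
    IsOpen {t : s | α t = β t} := by
  rw [isOpen_iff_mem_nhds]
  rintro ⟨t, ht⟩ (hαβ : α t = β t)
  have hmem : s ∈ 𝓝 t := hs.mem_nhds ht
  have hloc : α =ᶠ[𝓝 t] β := isMIntegralCurveAt_eventuallyEq_of_contMDiffAt_boundaryless
    (hv t ht) (hα.isMIntegralCurveAt hmem) (hβ.isMIntegralCurveAt hmem) hαβ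
  exact continuousAt_subtype_val (x := (⟨t, ht⟩ : s)) |>.preimage_mem_nhds hloc

end IntegralCurve

theorem isIntegralCurveOn_Ioo_isClopen_eqOn_of_contMDiffAt_general
    {E : Type*} [NormedAddCommGroup E] [NormedSpace ℝ E]
    {H : Type*} [TopologicalSpace H] {I : ModelWithCorners ℝ E H} [I.Boundaryless]
    {M : Type*} [TopologicalSpace M] [ChartedSpace H M] [IsManifold I (⊤ : ℕ∞) M]
    [T2Space M] {v : (x : M) → TangentSpace I x} {α β : ℝ → M} {a b t₀ : ℝ}
    (ht₀ : t₀ ∈ Ioo a b)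
    (hα : ∀ t ∈ Ioo a b, HasMFDerivAt 𝓘(ℝ, ℝ) I α t ((1 : ℝ →L[ℝ] ℝ).smulRight (v (α t))))
    (hβ : ∀ t ∈ Ioo a b, HasMFDerivAt 𝓘(ℝ, ℝ) I β t ((1 : ℝ →L[ℝ] ℝ).smulRight (v (β t))))
    (heq : α t₀ = β t₀)
    (hv : ∀ t ∈ Ioo a b,
      ContMDiffAt I I.tangent 1 (fun x => (⟨x, v x⟩ : TangentBundle I M)) (α t)) :
    IsClopen {t : Ioo a b | α t = β t} ∧ EqOn α β (Ioo a b) := by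
  have hα' : IsMIntegralCurveOn α v (Ioo a b) := fun t ht ↦ (hα t ht).hasMFDerivWithinAt
  have hβ' : IsMIntegralCurveOn β v (Ioo a b) := fun t ht ↦ (hβ t ht).hasMFDerivWithinAt
  have hclopen : IsClopen {t : Ioo a b | α t = β t} :=
    ⟨isClosed_setOf_eq_of_isMIntegralCurveOn hα' hβ',
      isOpen_setOf_eq_of_isMIntegralCurveOn isOpen_Ioo hα' hβ' hv⟩
  exact ⟨hclopen, isPreconnected_Ioo.eqOn_of_isClopen_setOf_eq ht₀ heq hclopen⟩

/-- **Uniqueness of integral curves on manifolds, open-interval version**: if `α` and `β` are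
integral curves of a vector field `v` on `J = (a, b) ∋ t₀` with `α t₀ = β t₀`, and `v` is `C¹`
at `α t` for every `t ∈ J`, then the set `{t ∈ J : α t = β t}` is clopen in `J` (in the subspace
topology); consequently `α = β` on `J`. -/
theorem isIntegralCurveOn_Ioo_isClopen_eqOn_of_contMDiffAt
    {E : Type*} [NormedAddCommGroup E] [NormedSpace ℝ E] [CompleteSpace E]
    {H : Type*} [TopologicalSpace H] {I : ModelWithCorners ℝ E H} [I.Boundaryless]
    {M : Type*} [TopologicalSpace M] [ChartedSpace H M] [IsManifold I (⊤ : ℕ∞) M]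
    [T2Space M] {v : (x : M) → TangentSpace I x} {α β : ℝ → M} {a b t₀ : ℝ}
    (ht₀ : t₀ ∈ Ioo a b)
    (hα : ∀ t ∈ Ioo a b, HasMFDerivAt 𝓘(ℝ, ℝ) I α t ((1 : ℝ →L[ℝ] ℝ).smulRight (v (α t))))
    (hβ : ∀ t ∈ Ioo a b, HasMFDerivAt 𝓘(ℝ, ℝ) I β t ((1 : ℝ →L[ℝ] ℝ).smulRight (v (β t))))
    (heq : α t₀ = β t₀)
    (hv : ∀ t ∈ Ioo a b,
      ContMDiffAt I I.tangent 1 (fun x => (⟨x, v x⟩ : TangentBundle I M)) (α t)) :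
    IsClopen {t : Ioo a b | α t = β t} ∧ EqOn α β (Ioo a b) :=
  isIntegralCurveOn_Ioo_isClopen_eqOn_of_contMDiffAt_general ht₀ hα hβ heq hv
end

section
/- Let M be a smooth manifold without boundary modelled on a real Banach space E, and let v be a vector field on M that is C¹ at every point of M. If α, β : ℝ → M are global integral curves of v (integral curves on all of ℝ) with α(t₀) = β(t₀) for some t₀ ∈ ℝ, then α = β. -/
open Set Metric
open scoped Manifold Topology

theorem isIntegralCurve_eq_of_contMDiffAt'_general
    {E : Type*} [NormedAddCommGroup E] [NormedSpace ℝ E]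
    {H : Type*} [TopologicalSpace H] {I : ModelWithCorners ℝ E H} [I.Boundaryless]
    {M : Type*} [TopologicalSpace M] [ChartedSpace H M] [IsManifold I (⊤ : ℕ∞) M]
    [T2Space M] {v : (x : M) → TangentSpace I x} {α β : ℝ → M} {t₀ : ℝ}
    (hv : ∀ x : M, ContMDiffAt I I.tangent 1 (fun x => (⟨x, v x⟩ : TangentBundle I M)) x)
    (hα : ∀ t : ℝ, HasMFDerivAt 𝓘(ℝ, ℝ) I α t ((1 : ℝ →L[ℝ] ℝ).smulRight (v (α t))))
    (hβ : ∀ t : ℝ, HasMFDerivAt 𝓘(ℝ, ℝ) I β t ((1 : ℝ →L[ℝ] ℝ).smulRight (v (β t))))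
    (heq : α t₀ = β t₀) :
    α = β :=
  isMIntegralCurve_Ioo_eq_of_contMDiff_boundaryless hv hα hβ heq

/-- **Global uniqueness of integral curves on manifolds**: if `v` is a vector field on a
boundaryless Hausdorff manifold `M` that is `C¹` at every point, then two global integral curves
of `v` that agree at one time `t₀` are equal. -/
theorem isIntegralCurve_eq_of_contMDiffAt'
    {E : Type*} [NormedAddCommGroup E] [NormedSpace ℝ E] [CompleteSpace E]
    {H : Type*} [TopologicalSpace H] {I : ModelWithCorners ℝ E H} [I.Boundaryless]
    {M : Type*} [TopologicalSpace M] [ChartedSpace H M] [IsManifold I (⊤ : ℕ∞) M]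
    [T2Space M] {v : (x : M) → TangentSpace I x} {α β : ℝ → M} {t₀ : ℝ}
    (hv : ∀ x : M, ContMDiffAt I I.tangent 1 (fun x => (⟨x, v x⟩ : TangentBundle I M)) x)
    (hα : ∀ t : ℝ, HasMFDerivAt 𝓘(ℝ, ℝ) I α t ((1 : ℝ →L[ℝ] ℝ).smulRight (v (α t))))
    (hβ : ∀ t : ℝ, HasMFDerivAt 𝓘(ℝ, ℝ) I β t ((1 : ℝ →L[ℝ] ℝ).smulRight (v (β t))))
    (heq : α t₀ = β t₀) :
    α = β :=
  isIntegralCurve_eq_of_contMDiffAt'_general hv hα hβ heq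
end

section
/- Let M be a compact smooth manifold without boundary modelled on a real Banach space E, and let v be a vector field on M that is C¹ at every point of M. Then for every x₀ ∈ M and t₀ ∈ ℝ there exists a global integral curve α : ℝ → M of v with α(t₀) = x₀, i.e. α(t₀) = x₀ and for every t ∈ ℝ, α has manifold derivative at t equal to the linear map r ↦ r • v(α(t)). -/
/-!
In a chart, a `C¹` vector field is locally Lipschitz, so Picard–Lindelöf gives integral curves
through all points near `x₀`, defined on a common time interval `(-ε, ε)` and staying inside the
chart. By compactness finitely many such neighbourhoods cover `M`, so a single `ε > 0` works for
every initial point; uniqueness of integral curves then lets these local curves be glued into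
global ones.
-/

open Set Metric
open scoped Manifold Topology NNReal

namespace IsPicardLindelof

variable {E : Type*} [NormedAddCommGroup E] [NormedSpace ℝ E] [CompleteSpace E]
  {f : ℝ → E → E} {tmin tmax : ℝ} {t₀ : Icc tmin tmax} {x₀ x : E} {a r L K : ℝ≥0}

theorem exists_eq_forall_mem_Icc_mem_closedBall_hasDerivWithinAt
    (hf : IsPicardLindelof f t₀ x₀ a r L K) (hx : x ∈ closedBall x₀ r) :
    ∃ α : ℝ → E, α t₀ = x ∧ ∀ t ∈ Icc tmin tmax,
      α t ∈ closedBall x₀ a ∧ HasDerivWithinAt α (f t (α t)) (Icc tmin tmax) t := by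
  obtain ⟨α, hα⟩ := ODE.FunSpace.exists_isFixedPt_next hf hx
  refine ⟨α.compProj, by rw [ODE.FunSpace.compProj_val, ← hα, ODE.FunSpace.next_apply₀],
    fun t ht ↦ ⟨α.compProj_mem_closedBall hf.mul_max_le, ?_⟩⟩
  apply ODE.hasDerivWithinAt_picard_Icc t₀.2 hf.continuousOn_uncurry
    α.continuous_compProj.continuousOn (fun _ _ ↦ α.compProj_mem_closedBall hf.mul_max_le)
    x ht |>.congr_of_mem _ ht
  intro t' ht'
  nth_rw 1 [← hα]
  rw [ODE.FunSpace.compProj_of_mem ht', ODE.FunSpace.next_apply]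

end IsPicardLindelof

namespace ContDiffAt

variable {E : Type*} [NormedAddCommGroup E] [NormedSpace ℝ E] [CompleteSpace E]
  {f : E → E} {x₀ : E}

theorem exists_forall_mem_closedBall_exists_eq_forall_mem_Ioo_mem_hasDerivAt
    (hf : ContDiffAt ℝ 1 f x₀) {s : Set E} (hs : s ∈ 𝓝 x₀) (t₀ : ℝ) :
    ∃ r > (0 : ℝ), ∃ ε > (0 : ℝ), ∀ x ∈ closedBall x₀ r, ∃ α : ℝ → E, α t₀ = x ∧
      ∀ t ∈ Ioo (t₀ - ε) (t₀ + ε), α t ∈ s ∧ HasDerivAt α (f (α t)) t := by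
  obtain ⟨ε, hε, a, r, L, K, hr, hpl⟩ := IsPicardLindelof.of_contDiffAt_one hf
  obtain ⟨ρ, hρ, hρs⟩ := Metric.mem_nhds_iff.mp hs
  -- shrink the Picard–Lindelöf ball into `s`; the solutions never leave that ball
  set a' : ℝ≥0 := min a ⟨ρ / 2, by positivity⟩
  have ha : (0 : ℝ) < a := by
    have h := (hpl t₀).mul_max_le
    simp only [add_sub_cancel_left, sub_sub_cancel, max_self] at h
    have : (0 : ℝ) < r := hr
    have : (0 : ℝ) ≤ L * ε := by positivity
    linarith
  have ha' : 0 < a' := lt_min ha (half_pos hρ)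
  obtain ⟨ε', hε', hpl'⟩ := (hpl t₀).exists_shrink_radius hε (min_le_left a _) (half_lt_self ha')
  refine ⟨a' / 2, by positivity, ε', hε', fun x hx ↦ ?_⟩
  obtain ⟨α, hα₀, hα⟩ := hpl'.exists_eq_forall_mem_Icc_mem_closedBall_hasDerivWithinAt hx
  refine ⟨α, hα₀, fun t ht ↦ ?_⟩
  obtain ⟨hmem, hderiv⟩ := hα t (Ioo_subset_Icc_self ht)
  refine ⟨hρs ?_, hderiv.hasDerivAt (Icc_mem_nhds ht.1 ht.2)⟩
  exact closedBall_subset_ball (min_le_right _ _ |>.trans_lt (half_lt_self hρ)) hmem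

end ContDiffAt

section Manifold

variable {E : Type*} [NormedAddCommGroup E] [NormedSpace ℝ E]
  {H : Type*} [TopologicalSpace H] {I : ModelWithCorners ℝ E H}
  {M : Type*} [TopologicalSpace M] [ChartedSpace H M] [IsManifold I 1 M]
  {v : (x : M) → TangentSpace I x}

theorem hasMFDerivAt_extChartAt_symm_comp {x₀ : M} {f : ℝ → E} {t : ℝ}
    (hft : f t ∈ interior (extChartAt I x₀).target)
    {w : TangentSpace I ((extChartAt I x₀).symm (f t))}
    (hf : HasDerivAt f (tangentCoordChange I ((extChartAt I x₀).symm (f t)) x₀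
      ((extChartAt I x₀).symm (f t)) w) t) :
    HasMFDerivAt 𝓘(ℝ, ℝ) I ((extChartAt I x₀).symm ∘ f) t ((1 : ℝ →L[ℝ] ℝ).smulRight w) := by
  let xₜ : M := (extChartAt I x₀).symm (f t)
  have hft' := interior_subset hft
  have hxₜ₀ : xₜ ∈ (extChartAt I x₀).source := (extChartAt I x₀).map_target hft'
  have hxₜ : xₜ ∈ (extChartAt I xₜ).source := mem_extChartAt_source xₜ
  refine ⟨(continuousAt_extChartAt_symm'' hft').comp hf.continuousAt, ?_⟩
  rw [ContinuousLinearMap.smulRight_one_eq_toSpanSingleton]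
  -- the `ContinuousSMul` instance on the tangent space must be supplied as the one on `E`
  refine @HasDerivWithinAt.hasFDerivWithinAt _ _ _ _ _ _ _ _ _
    (by exact inferInstanceAs (ContinuousSMul ℝ E)) _ ?_
  simp only [mfld_simps]
  apply HasDerivAt.hasDerivWithinAt
  show HasDerivAt ((extChartAt I xₜ ∘ (extChartAt I x₀).symm) ∘ f) w t
  -- `w` is the image of its own coordinate change to the chart at `x₀` under the change back
  rw [← tangentCoordChange_self (I := I) (x := xₜ) (z := xₜ) (v := w) hxₜ,
    ← tangentCoordChange_comp (I := I) (x := x₀) (v := w) ⟨⟨hxₜ, hxₜ₀⟩, hxₜ⟩]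
  refine HasFDerivAt.comp_hasDerivAt _ ?_ hf
  apply HasFDerivWithinAt.hasFDerivAt (s := range I) _ <|
    mem_nhds_iff.mpr ⟨interior (extChartAt I x₀).target,
      interior_subset.trans (extChartAt_target_subset_range ..), isOpen_interior, hft⟩
  rw [← (extChartAt I x₀).right_inv hft']
  exact hasFDerivWithinAt_tangentCoordChange ⟨hxₜ₀, hxₜ⟩

theorem exists_mem_nhds_forall_mem_exists_isMIntegralCurveOn_Ioo [CompleteSpace E] {x₀ : M}
    (hv : ContMDiffAt I I.tangent 1 (fun x ↦ (⟨x, v x⟩ : TangentBundle I M)) x₀)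
    (hx : I.IsInteriorPoint x₀) :
    ∃ ε > (0 : ℝ), ∃ u ∈ 𝓝 x₀, ∀ y ∈ u, ∃ γ : ℝ → M, γ 0 = y ∧
      IsMIntegralCurveOn γ v (Ioo (-ε) ε) := by
  obtain ⟨-, hv⟩ := contMDiffAt_iff.mp hv
  have hK : interior (extChartAt I x₀).target ∈ 𝓝 (extChartAt I x₀ x₀) :=
    isOpen_interior.mem_nhds (I.isInteriorPoint_iff.mp hx)
  obtain ⟨R, hR, ε, hε, hloc⟩ := (hv.contDiffAt (range_mem_nhds_isInteriorPoint hx)).snd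
    |>.exists_forall_mem_closedBall_exists_eq_forall_mem_Ioo_mem_hasDerivAt hK 0
  refine ⟨ε, hε, (extChartAt I x₀).source ∩ extChartAt I x₀ ⁻¹' closedBall (extChartAt I x₀ x₀) R,
    Filter.inter_mem (extChartAt_source_mem_nhds x₀)
      ((continuousAt_extChartAt x₀).preimage_mem_nhds (closedBall_mem_nhds _ hR)),
    fun y hy ↦ ?_⟩
  obtain ⟨f, hf₀, hf⟩ := hloc (extChartAt I x₀ y) hy.2
  refine ⟨(extChartAt I x₀).symm ∘ f,
    by rw [Function.comp_apply, hf₀, (extChartAt I x₀).left_inv hy.1], fun t ht ↦ ?_⟩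
  obtain ⟨hft, hderiv⟩ := hf t (by simpa using ht)
  exact (hasMFDerivAt_extChartAt_symm_comp hft hderiv).hasMFDerivWithinAt

theorem exists_pos_forall_exists_isMIntegralCurveOn_Ioo [CompleteSpace E] [CompactSpace M]
    [BoundarylessManifold I M]
    (hv : ∀ x : M, ContMDiffAt I I.tangent 1 (fun x ↦ (⟨x, v x⟩ : TangentBundle I M)) x) :
    ∃ ε > (0 : ℝ), ∀ x : M, ∃ γ : ℝ → M, γ 0 = x ∧ IsMIntegralCurveOn γ v (Ioo (-ε) ε) := by
  choose ε hε u hu hloc using fun x : M ↦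
    exists_mem_nhds_forall_mem_exists_isMIntegralCurveOn_Ioo (hv x)
      BoundarylessManifold.isInteriorPoint
  obtain ⟨s, -, hs⟩ := isCompact_univ.elim_nhds_subcover u fun x _ ↦ hu x
  obtain ⟨δ, hδ, hδs⟩ : ∃ δ > (0 : ℝ), ∀ x ∈ s, δ ≤ ε x :=
    ((eventually_mem_nhdsWithin (s := Ioi 0)).and <| (Filter.eventually_all_finset s).2 fun x _ ↦
      (eventually_le_nhds (hε x)).filter_mono nhdsWithin_le_nhds).exists
  refine ⟨δ, hδ, fun y ↦ ?_⟩
  obtain ⟨x, hxs, hyx⟩ := mem_iUnion₂.mp (hs (mem_univ y))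
  obtain ⟨γ, hγ₀, hγ⟩ := hloc x y hyx
  exact ⟨γ, hγ₀, hγ.mono (Ioo_subset_Ioo (neg_le_neg (hδs x hxs)) (hδs x hxs))⟩

end Manifold

/-- **Global existence of integral curves on compact manifolds**: if `M` is a compact
boundaryless Hausdorff manifold modelled on a Banach space `E` and `v` is a vector field on `M`
that is `C¹` at every point, then through every point `x₀` at every time `t₀` there is a global
integral curve `α : ℝ → M` of `v` with `α t₀ = x₀`. -/
theorem exists_isIntegralCurve_of_compactSpace
    {E : Type*} [NormedAddCommGroup E] [NormedSpace ℝ E] [CompleteSpace E]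
    {H : Type*} [TopologicalSpace H] {I : ModelWithCorners ℝ E H} [I.Boundaryless]
    {M : Type*} [TopologicalSpace M] [ChartedSpace H M] [IsManifold I (⊤ : ℕ∞) M]
    [T2Space M] [CompactSpace M] {v : (x : M) → TangentSpace I x}
    (hv : ∀ x : M, ContMDiffAt I I.tangent 1 (fun x => (⟨x, v x⟩ : TangentBundle I M)) x) :
    ∀ (x₀ : M) (t₀ : ℝ), ∃ α : ℝ → M, α t₀ = x₀ ∧
      ∀ t : ℝ, HasMFDerivAt 𝓘(ℝ, ℝ) I α t ((1 : ℝ →L[ℝ] ℝ).smulRight (v (α t))) := by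
  intro x₀ t₀
  obtain ⟨ε, hε, hloc⟩ := exists_pos_forall_exists_isMIntegralCurveOn_Ioo hv
  obtain ⟨γ, hγ₀, hγ⟩ := exists_isMIntegralCurve_of_isMIntegralCurveOn
    (fun x ↦ (hv x).contMDiffWithinAt) hε hloc x₀
  exact ⟨γ ∘ (· + -t₀), by simp [hγ₀], IsMIntegralCurve.comp_add hγ (-t₀)⟩
end
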